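/- arXiv:2209.11826 — 2 statements merged into one kernel-verified Lean document; each statement's English description precedes it below -/
import Mathlib

section
/- Let B^1 be a nonnegative irreducible n×n matrix and z a vector with 0 ≪ z ≪ 1 satisfying (-I + (I - Z) B^1) z = 0, where Z = diag(z). Let C be a nonnegative irreducible matrix with C z = z, and define B^2 = (I - Z)^{-1} C. Then for every β ∈ [0,1], the point (β z, (1-β) z, 0) is an equilibrium of the tri-virus system ẋ^k = (-I + (I - X^1 - X^2 - X^3) B^k) x^k, k=1,2,3, where X^l = diag(x^l) and B^3 is any n×n matrix. That is, the right-hand sides of all three equations vanish at (β z, (1-β) z, 0). -/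
open Matrix

/-- A real square matrix is Metzler if all off-diagonal entries are nonnegative. -/
def IsMetzler {m : Type*} [Fintype m] (A : Matrix m m ℝ) : Prop :=
  ∀ i j, i ≠ j → 0 ≤ A i j

/-- A matrix is irreducible if its associated directed graph is strongly connected,
equivalently for every nonempty proper subset `S` of indices there is a nonzero
entry from `S` to its complement. -/
def IrreducibleMat {m : Type*} [Fintype m] [DecidableEq m] (A : Matrix m m ℝ) : Prop :=
  ∀ S : Finset m, S.Nonempty → S ≠ Finset.univ → ∃ i ∈ S, ∃ j ∈ Sᶜ, A i j ≠ 0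

/-- The spectrum (set of complex eigenvalues) of a real square matrix. -/
noncomputable def specSet {m : Type*} [Fintype m] [DecidableEq m]
    (A : Matrix m m ℝ) : Set ℂ :=
  spectrum ℂ (A.map (algebraMap ℝ ℂ))

/-- `s(A)`: the largest real part of an eigenvalue of `A`. -/
noncomputable def spectralAbscissa {m : Type*} [Fintype m] [DecidableEq m]
    (A : Matrix m m ℝ) : ℝ :=
  sSup (Complex.re '' specSet A)

/-- `ρ(A)`: the spectral radius of `A`. -/
noncomputable def specRadius {m : Type*} [Fintype m] [DecidableEq m]
    (A : Matrix m m ℝ) : ℝ :=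
  sSup ((fun w : ℂ => ‖w‖) '' specSet A)

/-- A real square matrix is Hurwitz if every eigenvalue has strictly negative real part. -/
def IsHurwitz {m : Type*} [Fintype m] [DecidableEq m] (A : Matrix m m ℝ) : Prop :=
  ∀ z ∈ specSet A, z.re < 0

/-- With `z` the single-virus endemic equilibrium of virus 1,
`C` nonnegative irreducible with `Cz = z`, and `B² = (I - Z)⁻¹ C`, every point
`(βz, (1-β)z, 0)` with `β ∈ [0,1]` is an equilibrium of the tri-virus system
(with `D^k = I` and `B³` arbitrary). -/
theorem stmt_6 {n : ℕ} (B1 : Matrix (Fin n) (Fin n) ℝ)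
    (hB1 : ∀ i j, 0 ≤ B1 i j) (hB1irr : IrreducibleMat B1)
    (z : Fin n → ℝ) (hz : ∀ i, 0 < z i ∧ z i < 1)
    (heq : (-1 + (1 - Matrix.diagonal z) * B1).mulVec z = 0)
    (C : Matrix (Fin n) (Fin n) ℝ) (hC : ∀ i j, 0 ≤ C i j) (hCirr : IrreducibleMat C)
    (hCz : C.mulVec z = z)
    (B2 : Matrix (Fin n) (Fin n) ℝ) (hB2 : B2 = (1 - Matrix.diagonal z)⁻¹ * C)
    (B3 : Matrix (Fin n) (Fin n) ℝ)
    (β : ℝ) (hβ : 0 ≤ β ∧ β ≤ 1) :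
    (-1 + (1 - (Matrix.diagonal (β • z) + Matrix.diagonal ((1 - β) • z) +
        Matrix.diagonal (0 : Fin n → ℝ))) * B1).mulVec (β • z) = 0 ∧
    (-1 + (1 - (Matrix.diagonal (β • z) + Matrix.diagonal ((1 - β) • z) +
        Matrix.diagonal (0 : Fin n → ℝ))) * B2).mulVec ((1 - β) • z) = 0 ∧
    (-1 + (1 - (Matrix.diagonal (β • z) + Matrix.diagonal ((1 - β) • z) +
        Matrix.diagonal (0 : Fin n → ℝ))) * B3).mulVec (0 : Fin n → ℝ) = 0 := by
  have hdiag : Matrix.diagonal (β • z) + Matrix.diagonal ((1 - β) • z) +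
      Matrix.diagonal (0 : Fin n → ℝ) = Matrix.diagonal z := by
    rw [Matrix.diagonal_add, Matrix.diagonal_add]
    congr 1
    funext i
    simp [smul_eq_mul]
    ring
  rw [hdiag]
  have hdet : IsUnit (1 - Matrix.diagonal z).det := by
    have h1 : (1 : Matrix (Fin n) (Fin n) ℝ) - Matrix.diagonal z
        = Matrix.diagonal (fun i => 1 - z i) := by
      rw [← Matrix.diagonal_one, ← Matrix.diagonal_sub]
    rw [h1, Matrix.det_diagonal]
    refine isUnit_iff_ne_zero.2 (Finset.prod_ne_zero_iff.2 fun i _ => ?_)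
    have := (hz i).2; linarith
  refine ⟨?_, ?_, ?_⟩
  · rw [Matrix.mulVec_smul, heq, smul_zero]
  · rw [Matrix.mulVec_smul, hB2, Matrix.mul_nonsing_inv_cancel_left _ _ hdet]
    have : (-1 + C).mulVec z = 0 := by
      rw [Matrix.add_mulVec, hCz, Matrix.neg_mulVec, Matrix.one_mulVec]
      simp
    rw [this, smul_zero]
  · rw [Matrix.mulVec_zero]
end

section
/- Let B be nonnegative irreducible and z a strictly positive vector with (−I + (I − Z)B) z = 0 where Z = diag(z) and 0 ≪ z ≪ 1. For β ∈ [0,1], define the 2n×2n matrix J̄ = [[−I + (I−Z)B¹ − diag(B¹ β z), −diag(B¹ β z)], [−diag(B²(1−β) z), −I + (I−Z)B² − diag(B²(1−β) z)]], with B¹ = B and B² = (I−Z)^{-1} C where C is nonnegative irreducible with C z = z. Let P = diag(I_n, −I_n). Then P J̄ P (z; z) = 0, i.e., the stacked vector (zᵀ, zᵀ)ᵀ is a null vector of P J̄ P; consequently s(J̄) = 0. -/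
open Matrix

lemma aux_mulVec_map {m : Type*} [Fintype m] (A : Matrix m m ℝ) (v : m → ℝ) :
    (A.map (algebraMap ℝ ℂ)).mulVec (fun i => algebraMap ℝ ℂ (v i)) =
      fun i => algebraMap ℝ ℂ (A.mulVec v i) := by
  funext i
  simp [Matrix.mulVec, dotProduct, Matrix.map_apply]

lemma aux_exists_eigvec {m : Type*} [Fintype m] [DecidableEq m]
    (A : Matrix m m ℂ) (μ : ℂ) (hμ : μ ∈ spectrum ℂ A) :
    ∃ w : m → ℂ, w ≠ 0 ∧ A.mulVec w = μ • w := by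
  rw [spectrum.mem_iff, Matrix.isUnit_iff_isUnit_det, isUnit_iff_ne_zero, not_not] at hμ
  obtain ⟨w, hw, hw2⟩ := (Matrix.exists_mulVec_eq_zero_iff).2 hμ
  refine ⟨w, hw, ?_⟩
  rw [Matrix.sub_mulVec] at hw2
  have h2 : (algebraMap ℂ (Matrix m m ℂ) μ).mulVec w = μ • w := by
    rw [Algebra.algebraMap_eq_smul_one, Matrix.smul_mulVec, Matrix.one_mulVec]
  rw [h2] at hw2
  exact (sub_eq_zero.mp hw2).symm

lemma aux_zero_mem {m : Type*} [Fintype m] [DecidableEq m]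
    (A : Matrix m m ℂ) (w : m → ℂ) (hw : w ≠ 0) (h : A.mulVec w = 0) :
    (0 : ℂ) ∈ spectrum ℂ A := by
  rw [spectrum.zero_mem_iff, Matrix.isUnit_iff_isUnit_det, isUnit_iff_ne_zero, not_not]
  exact Matrix.exists_mulVec_eq_zero_iff.1 ⟨w, hw, h⟩

lemma aux_metzler_re_le_zero {m : Type*} [Fintype m] [DecidableEq m]
    (M : Matrix m m ℝ) (hM : ∀ i j, i ≠ j → 0 ≤ M i j)
    (v : m → ℝ) (hv : ∀ i, 0 < v i) (hMv : M.mulVec v = 0)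
    (μ : ℂ) (w : m → ℂ) (hw : w ≠ 0)
    (heig : (M.map (algebraMap ℝ ℂ)).mulVec w = μ • w) : μ.re ≤ 0 := by
  obtain ⟨j0, hj0⟩ := Function.ne_iff.mp hw
  obtain ⟨k, -, hk⟩ := Finset.exists_max_image Finset.univ
    (fun i => ‖w i‖ / v i) ⟨j0, Finset.mem_univ j0⟩
  have hwj0 : 0 < ‖w j0‖ / v j0 :=
    div_pos (by simpa using hj0) (hv j0)
  have hwkpos : 0 < ‖w k‖ := by
    have h1 := lt_of_lt_of_le hwj0 (hk j0 (Finset.mem_univ j0))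
    rcases (norm_nonneg (w k)).eq_or_lt with h | h
    · rw [← h] at h1; simp at h1
    · exact h
  -- row equation at k
  have hrow : ∑ j, (M k j : ℂ) * w j = μ * w k := by
    have := congrFun heig k
    simpa [Matrix.mulVec, dotProduct, Matrix.map_apply] using this
  have hsplit : (μ - (M k k : ℂ)) * w k = ∑ j ∈ Finset.univ.erase k, (M k j : ℂ) * w j := by
    rw [Finset.sum_erase_eq_sub (Finset.mem_univ k), hrow]
    ring
  -- bound
  have hrowsum : ∑ j, M k j * v j = 0 := by
    have := congrFun hMv k
    simpa [Matrix.mulVec, dotProduct] using this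
  have herase : ∑ j ∈ Finset.univ.erase k, M k j * v j = - (M k k * v k) := by
    rw [Finset.sum_erase_eq_sub (Finset.mem_univ k), hrowsum]
    ring
  set c : ℝ := ‖w k‖ / v k with hc
  have hbound : ‖(μ - (M k k : ℂ)) * w k‖ ≤ c * ∑ j ∈ Finset.univ.erase k, M k j * v j := by
    rw [hsplit]
    calc ‖∑ j ∈ Finset.univ.erase k, (M k j : ℂ) * w j‖
        ≤ ∑ j ∈ Finset.univ.erase k, ‖(M k j : ℂ) * w j‖ :=
          norm_sum_le _ _
      _ ≤ ∑ j ∈ Finset.univ.erase k, M k j * (c * v j) := by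
          refine Finset.sum_le_sum fun j hj => ?_
          have hj' : j ≠ k := (Finset.mem_erase.mp hj).1
          have hMkj : 0 ≤ M k j := hM k j (Ne.symm hj')
          have h1 : ‖(M k j : ℂ) * w j‖ = M k j * ‖w j‖ := by
            rw [norm_mul, Complex.norm_real, Real.norm_eq_abs, abs_of_nonneg hMkj]
          rw [h1]
          have h2 : ‖w j‖ ≤ c * v j := by
            have h3 := hk j (Finset.mem_univ j)
            rw [div_le_div_iff₀ (hv j) (hv k)] at h3
            rw [hc, div_mul_eq_mul_div, le_div_iff₀ (hv k)]
            linarith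
          exact mul_le_mul_of_nonneg_left h2 hMkj
      _ = c * ∑ j ∈ Finset.univ.erase k, M k j * v j := by
          rw [Finset.mul_sum]
          exact Finset.sum_congr rfl fun j _ => by ring
  rw [herase] at hbound
  have hcvk : c * v k = ‖w k‖ := div_mul_cancel₀ _ (hv k).ne'
  have hbound2 : ‖μ - (M k k : ℂ)‖ * ‖w k‖ ≤ - M k k * ‖w k‖ := by
    rw [← norm_mul]
    calc ‖(μ - (M k k : ℂ)) * w k‖ ≤ c * -(M k k * v k) := hbound
      _ = - M k k * (c * v k) := by ring
      _ = - M k k * ‖w k‖ := by rw [hcvk]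
  have habs : ‖μ - (M k k : ℂ)‖ ≤ - M k k :=
    le_of_mul_le_mul_right (by linarith) hwkpos
  have hre : (μ - (M k k : ℂ)).re ≤ ‖μ - (M k k : ℂ)‖ := Complex.re_le_norm _
  have : μ.re - M k k ≤ - M k k := by
    have h3 : (μ - (M k k : ℂ)).re = μ.re - M k k := by simp
    linarith [h3 ▸ hre]
  linarith

/-- The stacked vector `(z; z)` is a null vector of `P J̄ P`, where
`J̄` is the 2n×2n Jacobian sub-block evaluated on the line of equilibria
`(βz, (1-β)z, 0)` and `P = diag(I, -I)`; consequently `s(J̄) = 0`. -/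
theorem stmt_18 {n : ℕ} (B1 : Matrix (Fin n) (Fin n) ℝ)
    (hB1 : ∀ i j, 0 ≤ B1 i j) (hB1irr : IrreducibleMat B1)
    (z : Fin n → ℝ) (hz : ∀ i, 0 < z i ∧ z i < 1)
    (heq : ((-1 : Matrix (Fin n) (Fin n) ℝ) +
      (1 - Matrix.diagonal z) * B1).mulVec z = 0)
    (C : Matrix (Fin n) (Fin n) ℝ) (hC : ∀ i j, 0 ≤ C i j) (hCirr : IrreducibleMat C)
    (hCz : C.mulVec z = z)
    (B2 : Matrix (Fin n) (Fin n) ℝ) (hB2 : B2 = (1 - Matrix.diagonal z)⁻¹ * C)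
    (β : ℝ) (hβ : 0 ≤ β ∧ β ≤ 1)
    (Jbar : Matrix (Fin n ⊕ Fin n) (Fin n ⊕ Fin n) ℝ)
    (hJbar : Jbar = Matrix.fromBlocks
      (-1 + (1 - Matrix.diagonal z) * B1 - Matrix.diagonal (B1.mulVec (β • z)))
      (-(Matrix.diagonal (B1.mulVec (β • z))))
      (-(Matrix.diagonal (B2.mulVec ((1 - β) • z))))
      (-1 + (1 - Matrix.diagonal z) * B2 - Matrix.diagonal (B2.mulVec ((1 - β) • z))))
    (P : Matrix (Fin n ⊕ Fin n) (Fin n ⊕ Fin n) ℝ)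
    (hP : P = Matrix.fromBlocks 1 0 0 (-1)) :
    (P * Jbar * P).mulVec (Sum.elim z z) = 0 ∧ spectralAbscissa Jbar = 0 := by
  have hz1 : ∀ i, (1 : ℝ) - z i ≠ 0 := fun i => by have := (hz i).2; linarith
  have hdiag : (1 : Matrix (Fin n) (Fin n) ℝ) - Matrix.diagonal z
      = Matrix.diagonal (fun i => 1 - z i) := by
    rw [← Matrix.diagonal_one, Matrix.diagonal_sub]
  have hdet : IsUnit ((1 : Matrix (Fin n) (Fin n) ℝ) - Matrix.diagonal z).det := by
    rw [hdiag, Matrix.det_diagonal, isUnit_iff_ne_zero]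
    exact Finset.prod_ne_zero_iff.2 fun i _ => hz1 i
  have hCeq : ((1 : Matrix (Fin n) (Fin n) ℝ) - Matrix.diagonal z) * B2 = C := by
    rw [hB2, ← mul_assoc, Matrix.mul_nonsing_inv _ hdet, one_mul]
  have hB2e : ∀ i j, (1 - z i) * B2 i j = C i j := by
    intro i j
    have h := congrFun (congrFun hCeq i) j
    rwa [hdiag, Matrix.diagonal_mul] at h
  have hB2nn : ∀ i j, 0 ≤ B2 i j := by
    intro i j
    have h1 := hB2e i j
    have h2 := hC i j
    have h3 := (hz i).2
    nlinarith
  have heq2 : ((-1 : Matrix (Fin n) (Fin n) ℝ) + (1 - Matrix.diagonal z) * B2).mulVec z = 0 := by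
    rw [Matrix.add_mulVec, hCeq, hCz, Matrix.neg_mulVec, Matrix.one_mulVec]
    simp
  set b1 : Fin n → ℝ := B1.mulVec (β • z) with hb1
  set b2 : Fin n → ℝ := B2.mulVec ((1 - β) • z) with hb2
  have hb1nn : ∀ i, 0 ≤ b1 i := by
    intro i
    show (0:ℝ) ≤ ∑ j, B1 i j * (β • z) j
    refine Finset.sum_nonneg fun j _ => ?_
    simp only [Pi.smul_apply, smul_eq_mul]
    exact mul_nonneg (hB1 i j) (mul_nonneg hβ.1 (hz j).1.le)
  have hb2nn : ∀ i, 0 ≤ b2 i := by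
    intro i
    show (0:ℝ) ≤ ∑ j, B2 i j * ((1 - β) • z) j
    refine Finset.sum_nonneg fun j _ => ?_
    simp only [Pi.smul_apply, smul_eq_mul]
    exact mul_nonneg (hB2nn i j) (mul_nonneg (by linarith [hβ.2]) (hz j).1.le)
  set M : Matrix (Fin n ⊕ Fin n) (Fin n ⊕ Fin n) ℝ :=
    Matrix.fromBlocks (-1 + (1 - Matrix.diagonal z) * B1 - Matrix.diagonal b1)
      (Matrix.diagonal b1) (Matrix.diagonal b2)
      (-1 + (1 - Matrix.diagonal z) * B2 - Matrix.diagonal b2) with hM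
  have hPP : P * P = 1 := by
    rw [hP, Matrix.fromBlocks_multiply]
    simp [Matrix.fromBlocks_one]
  have hPJP : P * Jbar * P = M := by
    rw [hP, hJbar, hM, Matrix.fromBlocks_multiply, Matrix.fromBlocks_multiply]
    congr 1 <;> simp <;> ring
  have htop : ((-1 : Matrix (Fin n) (Fin n) ℝ) + (1 - Matrix.diagonal z) * B1
      - Matrix.diagonal b1).mulVec z + (Matrix.diagonal b1).mulVec z = 0 := by
    rw [Matrix.sub_mulVec, sub_add_cancel]
    exact heq
  have hbot : (Matrix.diagonal b2).mulVec z + ((-1 : Matrix (Fin n) (Fin n) ℝ)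
      + (1 - Matrix.diagonal z) * B2 - Matrix.diagonal b2).mulVec z = 0 := by
    rw [Matrix.sub_mulVec, add_sub_cancel]
    exact heq2
  have hMz : M.mulVec (Sum.elim z z) = 0 := by
    rw [hM, Matrix.fromBlocks_mulVec]
    have h1 : Sum.elim z z ∘ Sum.inl = z := rfl
    have h2 : Sum.elim z z ∘ Sum.inr = z := rfl
    rw [h1, h2, htop, hbot]
    funext i
    cases i <;> rfl
  refine ⟨by rw [hPJP]; exact hMz, ?_⟩
  -- Metzler property of M
  have hMetz : ∀ i j, i ≠ j → 0 ≤ M i j := by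
    rintro (i | i) (j | j) hij
    · have hij' : i ≠ j := fun h => hij (by rw [h])
      have : M (Sum.inl i) (Sum.inl j) = (1 - z i) * B1 i j := by
        rw [hM]
        simp only [Matrix.fromBlocks_apply₁₁, Matrix.sub_apply, Matrix.add_apply,
          Matrix.neg_apply, Matrix.one_apply_ne hij', Matrix.diagonal_apply_ne _ hij', hdiag,
          Matrix.diagonal_mul]
        ring
      rw [this]
      have := (hz i).2
      have := hB1 i j
      nlinarith
    · rw [hM]
      simp only [Matrix.fromBlocks_apply₁₂, Matrix.diagonal_apply]
      split
      · exact hb1nn i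
      · exact le_refl 0
    · rw [hM]
      simp only [Matrix.fromBlocks_apply₂₁, Matrix.diagonal_apply]
      split
      · exact hb2nn i
      · exact le_refl 0
    · have hij' : i ≠ j := fun h => hij (by rw [h])
      have : M (Sum.inr i) (Sum.inr j) = (1 - z i) * B2 i j := by
        rw [hM]
        simp only [Matrix.fromBlocks_apply₂₂, Matrix.sub_apply, Matrix.add_apply,
          Matrix.neg_apply, Matrix.one_apply_ne hij', Matrix.diagonal_apply_ne _ hij', hdiag,
          Matrix.diagonal_mul]
        ring
      rw [this]
      have := (hz i).2
      have := hB2nn i j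
      nlinarith
  have hvpos : ∀ i : Fin n ⊕ Fin n, 0 < Sum.elim z z i := by
    rintro (i | i) <;> exact (hz i).1
  -- complex versions
  set f := algebraMap ℝ ℂ with hf
  set Jc := Jbar.map f with hJc
  set Pc := P.map f with hPc
  set Mc := M.map f with hMcdef
  have hPcPc : Pc * Pc = 1 := by
    rw [hPc, ← Matrix.map_mul, hPP]
    exact Matrix.map_one _ (map_zero f) (map_one f)
  have hMc : Pc * Jc * Pc = Mc := by
    rw [hPc, hJc, hMcdef, ← Matrix.map_mul, ← Matrix.map_mul, hPJP]
  have hub : ∀ μ ∈ specSet Jbar, μ.re ≤ 0 := by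
    intro μ hμ
    obtain ⟨w, hw0, hwe⟩ := aux_exists_eigvec Jc μ hμ
    set u := Pc.mulVec w with hu
    have huw : Pc.mulVec u = w := by
      rw [hu, Matrix.mulVec_mulVec, hPcPc, Matrix.one_mulVec]
    have hu0 : u ≠ 0 := by
      intro h
      apply hw0
      rw [← huw, h, Matrix.mulVec_zero]
    have hue : Mc.mulVec u = μ • u := by
      rw [hu, Matrix.mulVec_mulVec, ← hMc]
      calc (Pc * Jc * Pc * Pc).mulVec w = (Pc * Jc * (Pc * Pc)).mulVec w := by
            rw [mul_assoc]
        _ = (Pc * Jc).mulVec w := by rw [hPcPc, mul_one]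
        _ = Pc.mulVec (Jc.mulVec w) := (Matrix.mulVec_mulVec w Pc Jc).symm
        _ = μ • u := by rw [hwe, Matrix.mulVec_smul, hu]
    exact aux_metzler_re_le_zero M hMetz (Sum.elim z z) hvpos hMz μ u hu0 hue
  rcases Nat.eq_zero_or_pos n with h0 | hpos
  · subst h0
    have hempty : specSet Jbar = ∅ := by
      ext μ
      simp only [specSet, Set.mem_empty_iff_false, iff_false]
      intro hmem
      rw [spectrum.mem_iff] at hmem
      apply hmem
      rw [Matrix.isUnit_iff_isUnit_det, Matrix.det_isEmpty]
      exact isUnit_one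
    rw [spectralAbscissa, hempty, Set.image_empty, Real.sSup_empty]
  · -- 0 is an eigenvalue
    set wr : Fin n ⊕ Fin n → ℝ := P.mulVec (Sum.elim z z) with hwr
    have hJwr : Jbar.mulVec wr = 0 := by
      rw [hwr, Matrix.mulVec_mulVec]
      have h1 : Jbar * P = P * (P * Jbar * P) := by
        rw [← mul_assoc, ← mul_assoc, hPP, one_mul]
      rw [h1, hPJP, ← Matrix.mulVec_mulVec, hMz, Matrix.mulVec_zero]
    have hwr0 : wr ≠ 0 := by
      intro h
      have h2 : P.mulVec wr = Sum.elim z z := by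
        rw [hwr, Matrix.mulVec_mulVec, hPP, Matrix.one_mulVec]
      rw [h, Matrix.mulVec_zero] at h2
      have h3 : (0 : ℝ) = z ⟨0, hpos⟩ := congrFun h2 (Sum.inl ⟨0, hpos⟩)
      have h4 := (hz ⟨0, hpos⟩).1
      linarith
    set wc : Fin n ⊕ Fin n → ℂ := fun i => f (wr i) with hwc
    have hwc0 : wc ≠ 0 := by
      intro h
      apply hwr0
      funext i
      have := congrFun h i
      simpa [hwc, hf] using this
    have hJwc : Jc.mulVec wc = 0 := by
      rw [hJc, hwc, hf, aux_mulVec_map, hJwr]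
      funext i
      simp
    have h0mem : (0 : ℂ) ∈ specSet Jbar := aux_zero_mem Jc wc hwc0 hJwc
    have hS : (0 : ℝ) ∈ Complex.re '' specSet Jbar := ⟨0, h0mem, rfl⟩
    have hbdd : ∀ x ∈ Complex.re '' specSet Jbar, x ≤ 0 := by
      rintro x ⟨μ, hμ, rfl⟩
      exact hub μ hμ
    rw [spectralAbscissa]
    exact le_antisymm (csSup_le ⟨0, hS⟩ hbdd) (le_csSup ⟨0, hbdd⟩ hS)
end
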